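/- arXiv:0905.0615 — 4 statements merged into one kernel-verified Lean document; each statement's English description precedes it below -/
import Mathlib

section
/- The Mañé potential φ satisfies: (1) φ(x,y) ≤ c(x,y) + α[0] for all x,y ∈ X (in particular φ is everywhere finite); (2) φ(x,x) = 0 for all x ∈ X; (3) a function u : X → ℝ is a critical sub-solution if and only if u(y) − u(x) ≤ φ(x,y) for all x,y ∈ X; (4) φ satisfies the triangle inequality φ(x,y) + φ(y,z) ≥ φ(x,z) for all x,y,z ∈ X. -/
open Metric Set Filter Topology

/-- `X` is a `B`-length space at scale `K`. -/
def IsBLengthSpaceAtScale (X : Type*) [MetricSpace X] (B K : ℝ) : Prop :=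
  ∀ x y : X, ∃ (n : ℕ) (p : ℕ → X), p 0 = x ∧ p n = y ∧
    (∀ i < n, dist (p i) (p (i + 1)) ≤ K) ∧
    ∑ i ∈ Finset.range n, dist (p i) (p (i + 1)) ≤ B * dist x y

/-- Uniform superlinearity of the cost `c`. -/
def UniformlySuperlinear {X : Type*} [MetricSpace X] (c : X → X → ℝ) : Prop :=
  ∀ k : ℝ, 0 ≤ k → ∃ C : ℝ, ∀ x y : X, k * dist x y - C ≤ c x y

/-- Uniform boundedness of the cost `c`. -/
def UniformlyBounded {X : Type*} [MetricSpace X] (c : X → X → ℝ) : Prop :=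
  ∀ R : ℝ, ∃ A : ℝ, ∀ x y : X, dist x y ≤ R → c x y ≤ A

/-- `u` is `α`-dominated: `u y - u x ≤ c x y + α` for all `x y`. -/
def Dominated {X : Type*} (c : X → X → ℝ) (α : ℝ) (u : X → ℝ) : Prop :=
  ∀ x y : X, u y - u x ≤ c x y + α

/-- Negative Lax-Oleinik semigroup. -/
noncomputable def Tm {X : Type*} (c : X → X → ℝ) (u : X → ℝ) (x : X) : ℝ :=
  ⨅ y, (u y + c y x)

/-- Positive Lax-Oleinik semigroup. -/
noncomputable def Tp {X : Type*} (c : X → X → ℝ) (u : X → ℝ) (x : X) : ℝ :=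
  ⨆ y, (u y - c x y)

/-- The critical constant `α[0]`: the smallest `α` for which `α`-dominated functions exist. -/
noncomputable def critValue {X : Type*} (c : X → X → ℝ) : ℝ :=
  sInf {α : ℝ | ∃ u : X → ℝ, Dominated c α u}

/-- The Mañé potential `φ(x,y) = sup_u (u y - u x)`, sup over critical sub-solutions. -/
noncomputable def mane {X : Type*} (c : X → X → ℝ) (x y : X) : ℝ :=
  sSup {r : ℝ | ∃ u : X → ℝ, Dominated c (critValue c) u ∧ r = u y - u x}

/-- A bi-infinite sequence is `(u,c,α)`-calibrated if all its finite subchains of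
consecutive terms are calibrated. -/
def IsCalibrated {X : Type*} (c : X → X → ℝ) (α : ℝ) (u : X → ℝ) (x : ℤ → X) : Prop :=
  ∀ (m : ℤ) (k : ℕ), u (x (m + k)) =
    u (x m) + (∑ i ∈ Finset.range k, c (x (m + i)) (x (m + i + 1))) + k * α

/-- The projected Aubry set of a critical sub-solution `u`. -/
def projAubry {X : Type*} (c : X → X → ℝ) (u : X → ℝ) : Set X :=
  {p : X | ∃ x : ℤ → X, IsCalibrated c (critValue c) u x ∧ x 0 = p}

/-- The set `Â_u` of pairs of consecutive terms of calibrated bi-infinite sequences. -/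
def aubryPairs {X : Type*} (c : X → X → ℝ) (u : X → ℝ) : Set (X × X) :=
  {q : X × X | ∃ (x : ℤ → X) (n : ℤ),
    IsCalibrated c (critValue c) u x ∧ x n = q.1 ∧ x (n + 1) = q.2}

/-- The projected Aubry set `A = ∩_u A_u`, intersection over all critical sub-solutions. -/
def projAubrySet {X : Type*} (c : X → X → ℝ) : Set X :=
  {p : X | ∀ u : X → ℝ, Dominated c (critValue c) u → p ∈ projAubry c u}

/-- The Aubry pair set `Â = ∩_u Â_u`, intersection over all critical sub-solutions. -/
def aubryPairsSet {X : Type*} (c : X → X → ℝ) : Set (X × X) :=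
  {q : X × X | ∀ u : X → ℝ, Dominated c (critValue c) u → q ∈ aubryPairs c u}

/-- `c_n(x,y)`: infimum of total cost over chains of length `n` from `x` to `y`. -/
noncomputable def cChain {X : Type*} (c : X → X → ℝ) (n : ℕ) (x y : X) : ℝ :=
  sInf {r : ℝ | ∃ p : ℕ → X, p 0 = x ∧ p n = y ∧
    r = ∑ i ∈ Finset.range n, c (p i) (p (i + 1))}

/-- `φ_n(x,y) = inf_{k ≥ n} (c_k(x,y) + k·α)`. -/
noncomputable def phiN {X : Type*} (c : X → X → ℝ) (α : ℝ) (n : ℕ) (x y : X) : ℝ :=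
  sInf {r : ℝ | ∃ k : ℕ, n ≤ k ∧ r = cChain c k x y + k * α}

/-- The Peierls barrier, with values in the extended reals. -/
noncomputable def peierls {X : Type*} (c : X → X → ℝ) (α : ℝ) (x y : X) : EReal :=
  Filter.liminf (fun n : ℕ => ((cChain c n x y + n * α : ℝ) : EReal)) Filter.atTop

/-- Negative Lax-Oleinik semigroup on extended-real-valued functions. -/
noncomputable def eTm {X : Type*} (c : X → X → ℝ) (u : X → EReal) (x : X) : EReal :=
  ⨅ y, (u y + (c y x : EReal))

/-- Positive Lax-Oleinik semigroup on extended-real-valued functions. -/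
noncomputable def eTp {X : Type*} (c : X → X → ℝ) (u : X → EReal) (x : X) : EReal :=
  ⨆ y, (u y - (c x y : EReal))

/-! Normalising at a base point, the `(α + ε)`-dominated functions vanishing there form nonempty
compact sets in the product topology on `X → ℝ`, decreasing as `ε ↓ 0`. A point of their
intersection is `α`-dominated, so the infimum `α[0]` is attained. Everything else follows from the
description of `φ(x, y)` as the least upper bound of `u y - u x` over critical sub-solutions `u`. -/

namespace Dominated

variable {X : Type*} {c : X → X → ℝ} {α β : ℝ} {u : X → ℝ}

lemma mono (h : Dominated c α u) (hαβ : α ≤ β) : Dominated c β u :=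
  fun x y => (h x y).trans (by linarith)

lemma of_forall_pos (h : ∀ ε > 0, Dominated c (α + ε) u) : Dominated c α u :=
  fun x y => le_of_forall_pos_le_add fun ε hε => by linarith [h ε hε x y]

lemma sub_const (h : Dominated c α u) (a : ℝ) : Dominated c α (fun x => u x - a) :=
  fun x y => by linarith [h x y]

lemma mem_Icc_of_eq_zero {x₀ : X} (h : Dominated c α u) (h₀ : u x₀ = 0) (y : X) :
    u y ∈ Icc (-(c y x₀ + α)) (c x₀ y + α) :=
  ⟨by linarith [h y x₀], by linarith [h x₀ y]⟩

end Dominated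

section Domination

variable {X : Type*} {c : X → X → ℝ}

lemma isClosed_setOf_dominated (α : ℝ) : IsClosed {u : X → ℝ | Dominated c α u} := by
  simp only [Dominated, ofPred_forall]
  exact isClosed_iInter fun x => isClosed_iInter fun y =>
    isClosed_le (by fun_prop) continuous_const

lemma isCompact_setOf_dominated_of_eq_zero (α : ℝ) (x₀ : X) :
    IsCompact {u : X → ℝ | u x₀ = 0 ∧ Dominated c α u} := by
  have hbox : IsCompact (univ.pi fun y => Icc (-(c y x₀ + α)) (c x₀ y + α)) :=
    isCompact_univ_pi fun _ => isCompact_Icc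
  refine hbox.of_isClosed_subset ?_ fun u hu y _ => hu.2.mem_Icc_of_eq_zero hu.1 y
  exact (isClosed_eq (continuous_apply x₀) continuous_const).inter (isClosed_setOf_dominated α)

lemma exists_dominated_of_forall_pos [Nonempty X] {α : ℝ}
    (h : ∀ ε > 0, ∃ u : X → ℝ, Dominated c (α + ε) u) : ∃ u : X → ℝ, Dominated c α u := by
  obtain ⟨x₀⟩ := ‹Nonempty X›
  let t : Ioi (0 : ℝ) → Set (X → ℝ) := fun ε => {u | u x₀ = 0 ∧ Dominated c (α + ε) u}
  have ht_directed : Directed (· ⊇ ·) t := fun ε δ =>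
    ⟨⟨min ε δ, mem_Ioi.2 (lt_min ε.2 δ.2)⟩,
      fun _ hu => ⟨hu.1, hu.2.mono (by simp)⟩,
      fun _ hu => ⟨hu.1, hu.2.mono (by simp)⟩⟩
  have ht_nonempty : ∀ ε, (t ε).Nonempty := fun ε => by
    obtain ⟨u, hu⟩ := h ε ε.2
    exact ⟨fun x => u x - u x₀, sub_self _, hu.sub_const _⟩
  obtain ⟨u, hu⟩ := IsCompact.nonempty_iInter_of_directed_nonempty_isCompact_isClosed t
    ht_directed ht_nonempty (fun ε => isCompact_setOf_dominated_of_eq_zero _ x₀)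
    (fun ε => (isCompact_setOf_dominated_of_eq_zero _ x₀).isClosed)
  exact ⟨u, Dominated.of_forall_pos fun ε hε => (mem_iInter.1 hu ⟨ε, hε⟩).2⟩

lemma UniformlySuperlinear.exists_dominated [MetricSpace X] (hsl : UniformlySuperlinear c) :
    ∃ α, Dominated c α (0 : X → ℝ) := by
  obtain ⟨C, hC⟩ := hsl 0 le_rfl
  exact ⟨C, fun x y => by simp only [Pi.zero_apply, sub_self]; linarith [hC x y]⟩

lemma exists_dominated_critValue [MetricSpace X] [Nonempty X] (hsl : UniformlySuperlinear c) :
    ∃ u : X → ℝ, Dominated c (critValue c) u := by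
  obtain ⟨α, hα⟩ := hsl.exists_dominated
  refine exists_dominated_of_forall_pos fun ε hε => ?_
  have hne : {α : ℝ | ∃ u : X → ℝ, Dominated c α u}.Nonempty := ⟨α, 0, hα⟩
  obtain ⟨β, ⟨u, hu⟩, hβ⟩ := exists_lt_of_csInf_lt hne (lt_add_of_pos_right (critValue c) hε)
  exact ⟨u, hu.mono hβ.le⟩

end Domination

section ManePotential

variable {X : Type*} {c : X → X → ℝ}

lemma mane_le_of_forall (h₀ : ∃ u : X → ℝ, Dominated c (critValue c) u) {x y : X} {r : ℝ}
    (h : ∀ u, Dominated c (critValue c) u → u y - u x ≤ r) : mane c x y ≤ r := by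
  obtain ⟨u₀, hu₀⟩ := h₀
  exact csSup_le ⟨_, u₀, hu₀, rfl⟩ fun _ ⟨u, hu, hr⟩ => hr ▸ h u hu

lemma Dominated.sub_le_mane {u : X → ℝ} (hu : Dominated c (critValue c) u) (x y : X) :
    u y - u x ≤ mane c x y :=
  le_csSup ⟨c x y + critValue c, fun _ ⟨_, hv, hr⟩ => hr ▸ hv x y⟩ ⟨u, hu, rfl⟩

lemma mane_le_add_critValue (h₀ : ∃ u : X → ℝ, Dominated c (critValue c) u) (x y : X) :
    mane c x y ≤ c x y + critValue c :=
  mane_le_of_forall h₀ fun _ hu => hu x y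

lemma mane_self (h₀ : ∃ u : X → ℝ, Dominated c (critValue c) u) (x : X) : mane c x x = 0 := by
  obtain ⟨u₀, hu₀⟩ := h₀
  refine le_antisymm (mane_le_of_forall ⟨u₀, hu₀⟩ fun _ _ => (sub_self _).le) ?_
  simpa using hu₀.sub_le_mane x x

lemma dominated_critValue_iff_forall_sub_le_mane (h₀ : ∃ u : X → ℝ, Dominated c (critValue c) u)
    (u : X → ℝ) :
    Dominated c (critValue c) u ↔ ∀ x y, u y - u x ≤ mane c x y :=
  ⟨Dominated.sub_le_mane, fun h x y => (h x y).trans (mane_le_add_critValue h₀ x y)⟩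

lemma mane_le_mane_add_mane (h₀ : ∃ u : X → ℝ, Dominated c (critValue c) u) (x y z : X) :
    mane c x z ≤ mane c x y + mane c y z :=
  mane_le_of_forall h₀ fun u hu => by linarith [hu.sub_le_mane x y, hu.sub_le_mane y z]

end ManePotential

theorem mane_potential_basic_properties_general {X : Type*} [MetricSpace X] [Nonempty X]
    {c : X → X → ℝ}
    (hsl : UniformlySuperlinear c) :
    (∀ x y : X, mane c x y ≤ c x y + critValue c) ∧
    (∀ x : X, mane c x x = 0) ∧
    (∀ u : X → ℝ, Dominated c (critValue c) u ↔ ∀ x y : X, u y - u x ≤ mane c x y) ∧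
    (∀ x y z : X, mane c x z ≤ mane c x y + mane c y z) := by
  have h₀ := exists_dominated_critValue hsl
  exact ⟨mane_le_add_critValue h₀, mane_self h₀, dominated_critValue_iff_forall_sub_le_mane h₀,
    mane_le_mane_add_mane h₀⟩

theorem mane_potential_basic_properties {X : Type*} [MetricSpace X] [Nonempty X] [ProperSpace X]
    {B K : ℝ} (hB : 1 ≤ B) (hK : 0 < K) (hlen : IsBLengthSpaceAtScale X B K)
    {c : X → X → ℝ} (hcont : Continuous fun q : X × X => c q.1 q.2)
    (hsl : UniformlySuperlinear c) (hub : UniformlyBounded c) :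
    (∀ x y : X, mane c x y ≤ c x y + critValue c) ∧
    (∀ x : X, mane c x x = 0) ∧
    (∀ u : X → ℝ, Dominated c (critValue c) u ↔ ∀ x y : X, u y - u x ≤ mane c x y) ∧
    (∀ x y z : X, mane c x z ≤ mane c x y + mane c y z) :=
  mane_potential_basic_properties_general hsl
end

section
/- If x ∈ X is a non-isolated point, then the function φ_x = φ(x,·) is continuous at x if and only if x belongs to the projected Aubry set A. -/
open Metric Set Filter Topology

/-!
Write `φ₁(x, y)` (`chainPotential`) for the infimum of the action `∑ (c + α[0])` over chains of
length at least one from `x` to `y`. Closed chains have nonnegative action, so `φ₁` is finite and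
satisfies the triangle inequality, and `φ₁(x, ·)` reset to `0` at `x` is a critical sub-solution.
Hence `φ(x, y) = φ₁(x, y)` for `y ≠ x` and `-φ₁(y, x) ≤ φ(x, y) ≤ φ₁(x, y)`, and both sides of the
equivalence turn out to mean `φ₁(x, x) = 0`.

* Moving the last (first) point of a chain shows that `φ₁(x, ·)` and `φ₁(·, x)` are upper
  semicontinuous, which squeezes `φ_x` to `0` at `x` when `φ₁(x, x) = 0`. Conversely `φ₁(x, ·)` is
  lower semicontinuous: dominated functions grow at most linearly on a `B`-length space, so by
  superlinearity the last step of a near-optimal chain stays in a compact set, on which `c` is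
  uniformly continuous. At a non-isolated `x`, continuity of `φ_x` then forces `φ₁(x, x) ≤ 0`.
* Testing a calibrated chain through `x` against the sub-solution `φ₁(x, ·)` gives `φ₁(x, x) ≤ 0`.
  Conversely, if `φ₁(x, x) = 0`, the periodic extensions of closed chains through `x` whose action
  tends to `0` have uniformly bounded steps; a pointwise convergent subsequence (Tychonoff) has
  calibration defect tending to `0` against every sub-solution, so its limit is calibrated.
-/

section Windows

variable {X : Type*}

def windowCost (c : X → X → ℝ) (h : ℤ → X) (a : ℤ) (k : ℕ) : ℝ :=
  ∑ i ∈ Finset.range k, c (h (a + i)) (h (a + i + 1))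

variable {c : X → X → ℝ} {h : ℤ → X}

@[simp]
lemma windowCost_zero (a : ℤ) : windowCost c h a 0 = 0 := Finset.sum_range_zero _

lemma windowCost_succ (a : ℤ) (k : ℕ) :
    windowCost c h a (k + 1) = windowCost c h a k + c (h (a + k)) (h (a + k + 1)) :=
  Finset.sum_range_succ _ _

lemma windowCost_add (a : ℤ) (m n : ℕ) :
    windowCost c h a (m + n) = windowCost c h a m + windowCost c h (a + m) n := by
  simp only [windowCost, Finset.sum_range_add, Nat.cast_add, add_assoc]

lemma windowCost_succ' (a : ℤ) (k : ℕ) :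
    windowCost c h a (k + 1) = c (h a) (h (a + 1)) + windowCost c h (a + 1) k := by
  rw [add_comm k, windowCost_add]
  simp [windowCost]

lemma windowCost_congr {h' : ℤ → X} {a b : ℤ} {k : ℕ}
    (hh : ∀ i ≤ k, h (a + i) = h' (b + i)) : windowCost c h a k = windowCost c h' b k := by
  refine Finset.sum_congr rfl fun i hi => ?_
  have hi := Finset.mem_range.1 hi
  have hsucc := hh (i + 1) hi
  push_cast [← add_assoc] at hsucc
  rw [hh i hi.le, hsucc]

lemma windowCost_update_succ (a : ℤ) (k : ℕ) (z : X) :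
    windowCost c (Function.update h (a + k + 1) z) a (k + 1) =
      windowCost c h a k + c (h (a + k)) z := by
  rw [windowCost_succ, Function.update_self, Function.update_of_ne (by omega)]
  congr 1
  exact windowCost_congr fun i hi => Function.update_of_ne (by omega) _ _

lemma dist_le_windowCost [PseudoMetricSpace X] (h : ℤ → X) (a : ℤ) (k : ℕ) :
    dist (h a) (h (a + k)) ≤ windowCost dist h a k := by
  induction k with
  | zero => simp
  | succ k ih =>
    rw [windowCost_succ, Nat.cast_succ, ← add_assoc]
    linarith [dist_triangle (h a) (h (a + k)) (h (a + k + 1))]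

lemma dist_zero_le_natAbs_mul [PseudoMetricSpace X] {D : ℝ}
    (hD : ∀ i, dist (h i) (h (i + 1)) ≤ D) (i : ℤ) : dist (h 0) (h i) ≤ i.natAbs * D := by
  have key (a : ℤ) (k : ℕ) : dist (h a) (h (a + k)) ≤ k * D :=
    (dist_le_windowCost h a k).trans <| by
      simpa [windowCost] using Finset.sum_le_sum fun i (_ : i ∈ Finset.range k) => hD (a + i)
  obtain ⟨n, rfl | rfl⟩ := Int.eq_nat_or_neg i
  · simpa using key 0 n
  · simpa [dist_comm] using key (-n) n

lemma Function.Periodic.windowCost_eq {N : ℕ} (hh : Function.Periodic h N) (a : ℤ) :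
    windowCost c h a N = windowCost c h 0 N := by
  have step (b : ℤ) : windowCost c h (b + 1) N = windowCost c h b N := by
    have h1 := windowCost_succ (c := c) (h := h) b N
    rw [windowCost_succ', hh b, show b + N + 1 = b + 1 + N by ring, hh (b + 1)] at h1
    linarith
  induction a using Int.induction_on with
  | zero => rfl
  | succ i ih => rw [step, ih]
  | pred i ih => rw [← step, sub_add_cancel, ih]

lemma Function.Periodic.windowCost_nat_mul {N : ℕ} (hh : Function.Periodic h N) (a : ℤ)
    (q : ℕ) : windowCost c h a (q * N) = q * windowCost c h 0 N := by
  induction q with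
  | zero => simp
  | succ q ih =>
    rw [Nat.succ_mul, windowCost_add, ih, hh.windowCost_eq (a + _)]
    push_cast
    ring

end Windows

section Defect

variable {X : Type*} {c : X → X → ℝ} {α : ℝ} {u : X → ℝ} {h : ℤ → X}

/-- Vanishes exactly on the `(u, c, α)`-calibrated windows `h a, …, h (a + k)`
(cf. `IsCalibrated`). -/
def windowDefect (c : X → X → ℝ) (α : ℝ) (u : X → ℝ) (h : ℤ → X) (a : ℤ) (k : ℕ) : ℝ :=
  windowCost c h a k + k * α - (u (h (a + k)) - u (h a))

lemma windowDefect_one (a : ℤ) :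
    windowDefect c α u h a 1 = c (h a) (h (a + 1)) + α - (u (h (a + 1)) - u (h a)) := by
  simp [windowDefect, windowCost]

lemma windowDefect_add (a : ℤ) (m n : ℕ) :
    windowDefect c α u h a (m + n) = windowDefect c α u h a m + windowDefect c α u h (a + m) n := by
  simp only [windowDefect, windowCost_add, Nat.cast_add, add_assoc]
  ring

lemma Dominated.windowDefect_nonneg (hu : Dominated c α u) (a : ℤ) (k : ℕ) :
    0 ≤ windowDefect c α u h a k := by
  induction k with
  | zero => simp [windowDefect]
  | succ k ih =>
    rw [windowDefect_add, windowDefect_one]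
    linarith [hu (h (a + k)) (h (a + k + 1))]

lemma Dominated.sub_le_windowCost (hu : Dominated c α u) (a : ℤ) (k : ℕ) :
    u (h (a + k)) - u (h a) ≤ windowCost c h a k + k * α := by
  have := hu.windowDefect_nonneg (h := h) a k
  rw [windowDefect] at this
  linarith

lemma Dominated.windowDefect_mono (hu : Dominated c α u) (a : ℤ) {k k' : ℕ} (hk : k ≤ k') :
    windowDefect c α u h a k ≤ windowDefect c α u h a k' := by
  obtain ⟨d, rfl⟩ := Nat.exists_eq_add_of_le hk
  rw [windowDefect_add]
  linarith [hu.windowDefect_nonneg (h := h) (a + k) d]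

lemma Dominated.windowDefect_one_le (hu : Dominated c α u) (a : ℤ) {i k : ℕ} (hi : i < k) :
    windowDefect c α u h (a + i) 1 ≤ windowDefect c α u h a k :=
  calc windowDefect c α u h (a + i) 1 ≤ windowDefect c α u h a (i + 1) := by
        rw [windowDefect_add]
        linarith [hu.windowDefect_nonneg (h := h) a i]
    _ ≤ windowDefect c α u h a k := hu.windowDefect_mono a hi

lemma Dominated.windowDefect_le_of_periodic (hu : Dominated c α u) {N : ℕ}
    (hh : Function.Periodic h N) (hN : 0 < N) (a : ℤ) (k : ℕ) :
    windowDefect c α u h a k ≤ k * (windowCost c h 0 N + N * α) := by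
  refine (hu.windowDefect_mono a (Nat.le_mul_of_pos_right k hN)).trans_eq ?_
  have hper : h (a + (k * N : ℕ)) = h a := by
    rw [Nat.cast_mul, (hh.nat_mul k) a]
  rw [windowDefect, hper, hh.windowCost_nat_mul]
  push_cast
  ring

lemma Dominated.mono_s5 (hu : Dominated c α u) {β : ℝ} (hαβ : α ≤ β) : Dominated c β u :=
  fun x y => (hu x y).trans (by linarith)

end Defect

section Critical

variable {X : Type*} [MetricSpace X] {c : X → X → ℝ} {h : ℤ → X}

lemma exists_dominated_of_critValue_lt (hsl : UniformlySuperlinear c) {α : ℝ}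
    (hα : critValue c < α) : ∃ u, Dominated c α u := by
  obtain ⟨C, hC⟩ := hsl 0 le_rfl
  have hne : {α : ℝ | ∃ u : X → ℝ, Dominated c α u}.Nonempty :=
    ⟨C, fun _ => 0, fun x y => by linarith [hC x y]⟩
  obtain ⟨β, ⟨u, hu⟩, hβ⟩ := exists_lt_of_csInf_lt hne hα
  exact ⟨u, hu.mono_s5 hβ.le⟩

lemma windowCost_add_mul_critValue_nonneg (hsl : UniformlySuperlinear c) {a : ℤ} {k : ℕ}
    (hclosed : h (a + k) = h a) : 0 ≤ windowCost c h a k + k * critValue c := by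
  refine le_of_forall_pos_le_add fun ε hε => ?_
  obtain ⟨u, hu⟩ := exists_dominated_of_critValue_lt hsl
    (lt_add_of_pos_right (critValue c) (div_pos hε (Nat.cast_add_one_pos k)))
  have hdef := hu.windowDefect_nonneg (h := h) a k
  have hsmall : (k : ℝ) * (ε / (k + 1)) ≤ ε := by
    rw [mul_div_assoc', div_le_iff₀ (Nat.cast_add_one_pos k)]
    nlinarith
  rw [windowDefect, hclosed] at hdef
  linarith

end Critical

section Potential

variable {X : Type*} {c : X → X → ℝ}

def chainActions (c : X → X → ℝ) (x y : X) : Set ℝ :=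
  {r | ∃ (h : ℤ → X) (k : ℕ), 0 < k ∧ h 0 = x ∧ h k = y ∧
    r = windowCost c h 0 k + k * critValue c}

/-- The paper's `φ₁ = phiN c (critValue c) 1`, written as a single infimum over chains of length
at least one. -/
noncomputable def chainPotential (c : X → X → ℝ) (x y : X) : ℝ :=
  sInf (chainActions c x y)

lemma chainActions_nonempty (c : X → X → ℝ) (x y : X) : (chainActions c x y).Nonempty :=
  ⟨_, fun i => if i = 0 then x else y, 1, one_pos, by simp, by simp, rfl⟩

lemma add_mem_chainActions {x y z : X} {r s : ℝ} (hr : r ∈ chainActions c x y)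
    (hs : s ∈ chainActions c y z) : r + s ∈ chainActions c x z := by
  obtain ⟨h₁, k₁, hk₁, hx, hy₁, rfl⟩ := hr
  obtain ⟨h₂, k₂, hk₂, hy₂, hz, rfl⟩ := hs
  set h : ℤ → X := fun i => if i ≤ k₁ then h₁ i else h₂ (i - k₁)
  refine ⟨h, k₁ + k₂, by omega, by simp [h, hx], ?_, ?_⟩
  · simpa [h, hk₂.ne'] using hz
  · rw [windowCost_add, windowCost_congr (h := h) (h' := h₁) (b := 0) fun i hi => if_pos (by omega),
      windowCost_congr (h := h) (h' := h₂) (b := 0) fun i _ => ?_]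
    · push_cast
      ring
    · rcases Nat.eq_zero_or_pos i with rfl | hi
      · simp [h, hy₁, hy₂]
      · simp only [h, if_neg (show ¬((0 : ℤ) + k₁ + i ≤ k₁) by omega)]
        congr 1
        ring

lemma le_chainPotential {x y : X} {r : ℝ}
    (H : ∀ (h : ℤ → X) (k : ℕ), 0 < k → h 0 = x → h k = y →
      r ≤ windowCost c h 0 k + k * critValue c) :
    r ≤ chainPotential c x y :=
  le_csInf (chainActions_nonempty c x y) fun _ ⟨h, k, hk, hx, hy, hr⟩ => hr ▸ H h k hk hx hy

lemma exists_lt_of_chainPotential_lt {x y : X} {r : ℝ} (hr : chainPotential c x y < r) :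
    ∃ (h : ℤ → X) (k : ℕ), 0 < k ∧ h 0 = x ∧ h k = y ∧
      windowCost c h 0 k + k * critValue c < r := by
  obtain ⟨_, ⟨h, k, hk, hx, hy, rfl⟩, hlt⟩ := exists_lt_of_csInf_lt (chainActions_nonempty c x y) hr
  exact ⟨h, k, hk, hx, hy, hlt⟩

lemma exists_periodic_of_chainPotential_self_lt {x : X} {ε : ℝ}
    (hx : chainPotential c x x < ε) :
    ∃ (Y : ℤ → X) (N : ℕ), 0 < N ∧ Function.Periodic Y N ∧ Y 0 = x ∧
      windowCost c Y 0 N + N * critValue c < ε := by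
  obtain ⟨h, N, hN, h0, hN', hlt⟩ := exists_lt_of_chainPotential_lt hx
  refine ⟨fun i => h (i % N), N, hN, fun i => by simp, by simp [h0], ?_⟩
  rwa [windowCost_congr (h' := h) (b := 0) fun i hi => ?_]
  rcases hi.lt_or_eq with hi | rfl
  · rw [zero_add, Int.emod_eq_of_lt (by omega) (by omega)]
  · simp [h0, hN']

lemma Dominated.sub_le_chainPotential {u : X → ℝ} (hu : Dominated c (critValue c) u) (x y : X) :
    u y - u x ≤ chainPotential c x y :=
  le_chainPotential fun h k _ hx hy => by simpa [hx, hy] using hu.sub_le_windowCost (h := h) 0 k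

lemma mane_set_bddAbove (x y : X) :
    BddAbove {r : ℝ | ∃ u : X → ℝ, Dominated c (critValue c) u ∧ r = u y - u x} :=
  ⟨chainPotential c x y, fun _ ⟨_, hu, hr⟩ => hr ▸ hu.sub_le_chainPotential x y⟩

variable [MetricSpace X]

lemma chainActions_bddBelow (hsl : UniformlySuperlinear c) (x y : X) :
    BddBelow (chainActions c x y) := by
  refine ⟨-(c y x + critValue c), ?_⟩
  rintro _ ⟨h, k, -, hx, hy, rfl⟩
  have hclosed : Function.update h (0 + k + 1) x (0 + (k + 1 : ℕ)) =
      Function.update h (0 + k + 1) x 0 := by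
    rw [Function.update_of_ne (show (0 : ℤ) ≠ 0 + k + 1 by omega), Nat.cast_succ, ← add_assoc,
      Function.update_self, hx]
  have := windowCost_add_mul_critValue_nonneg hsl hclosed
  rw [windowCost_update_succ, zero_add, hy] at this
  push_cast at this
  linarith

lemma chainPotential_le (hsl : UniformlySuperlinear c) {h : ℤ → X} {a : ℤ} {k : ℕ} (hk : 0 < k)
    {x y : X} (hx : h a = x) (hy : h (a + k) = y) :
    chainPotential c x y ≤ windowCost c h a k + k * critValue c := by
  refine csInf_le (chainActions_bddBelow hsl x y)
    ⟨fun i => h (a + i), k, hk, by simpa using hx, hy, ?_⟩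
  congr 1
  exact (windowCost_congr fun i _ => by simp).symm

lemma chainPotential_le_add_cost (hsl : UniformlySuperlinear c) {h : ℤ → X} {x : X}
    (hx : h 0 = x) (k : ℕ) (y : X) :
    chainPotential c x y ≤ windowCost c h 0 k + c (h k) y + (k + 1) * critValue c := by
  have := chainPotential_le hsl (h := Function.update h (0 + k + 1) y) (a := 0) (x := x) (y := y)
    k.succ_pos (by rw [Function.update_of_ne (by omega), hx]) (by simp)
  rw [windowCost_update_succ] at this
  push_cast at this
  simpa using this

lemma chainPotential_le_cost_add (hsl : UniformlySuperlinear c) {h : ℤ → X} {k : ℕ} {y : X}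
    (hy : h (k + 1) = y) (x : X) :
    chainPotential c x y ≤ c x (h 1) + windowCost c h 1 k + (k + 1) * critValue c := by
  have := chainPotential_le hsl (h := Function.update h 0 x) (a := 0) (x := x) (y := y)
    k.succ_pos (Function.update_self ..) (by rw [Function.update_of_ne (by omega)]; simpa using hy)
  rw [windowCost_succ', zero_add, Function.update_self, Function.update_of_ne one_ne_zero,
    windowCost_congr (h' := h) (b := 1) fun i _ => Function.update_of_ne (by omega) _ _] at this
  push_cast at this
  linarith

lemma chainPotential_le_cost (hsl : UniformlySuperlinear c) (x y : X) :
    chainPotential c x y ≤ c x y + critValue c := by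
  simpa using chainPotential_le_add_cost hsl (h := fun _ => x) rfl 0 y

lemma chainPotential_self_nonneg (hsl : UniformlySuperlinear c) (x : X) :
    0 ≤ chainPotential c x x :=
  le_chainPotential fun _ _ _ hx hy =>
    windowCost_add_mul_critValue_nonneg hsl (by simpa [hx] using hy)

lemma chainPotential_triangle (hsl : UniformlySuperlinear c) (x y z : X) :
    chainPotential c x z ≤ chainPotential c x y + chainPotential c y z := by
  have h₁ (s : ℝ) (hs : s ∈ chainActions c y z) : chainPotential c x z - s ≤ chainPotential c x y :=
    le_csInf (chainActions_nonempty c x y) fun r hr => by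
      have : chainPotential c x z ≤ r + s :=
        csInf_le (chainActions_bddBelow hsl x z) (add_mem_chainActions hr hs)
      linarith
  have h₂ : chainPotential c x z - chainPotential c x y ≤ chainPotential c y z :=
    le_csInf (chainActions_nonempty c y z) fun s hs => by linarith [h₁ s hs]
  linarith

end Potential

section Mane

variable {X : Type*} [MetricSpace X] {c : X → X → ℝ}

lemma dominated_update_chainPotential [DecidableEq X] (hsl : UniformlySuperlinear c) (x : X) :
    Dominated c (critValue c) (Function.update (chainPotential c x) x 0) := by
  intro z z'
  have hcost := chainPotential_le_cost hsl (c := c)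
  have htri := chainPotential_triangle hsl (c := c) x
  simp only [Function.update_apply]
  split_ifs with hz' hz hz
  · rw [hz, hz']
    linarith [chainPotential_self_nonneg hsl (c := c) x, hcost x x]
  · rw [hz']
    linarith [chainPotential_self_nonneg hsl (c := c) x, htri z x, hcost z x]
  · rw [hz]
    linarith [hcost x z']
  · linarith [htri z z', hcost z z']

lemma mane_le_chainPotential (hsl : UniformlySuperlinear c) (x y : X) :
    mane c x y ≤ chainPotential c x y := by
  classical
  exact csSup_le ⟨_, _, dominated_update_chainPotential hsl x, rfl⟩
    fun _ ⟨_, hu, hr⟩ => hr ▸ hu.sub_le_chainPotential x y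

lemma mane_self_s5 (hsl : UniformlySuperlinear c) (x : X) : mane c x x = 0 := by
  classical
  exact le_antisymm (csSup_le ⟨_, _, dominated_update_chainPotential hsl x, rfl⟩
      fun _ ⟨_, _, hr⟩ => by rw [hr, sub_self])
    (by simpa using (dominated_update_chainPotential hsl x).sub_le_mane x x)

lemma chainPotential_le_mane (hsl : UniformlySuperlinear c) {x y : X} (hyx : y ≠ x) :
    chainPotential c x y ≤ mane c x y := by
  classical
  simpa [hyx] using (dominated_update_chainPotential hsl x).sub_le_mane x y

lemma neg_chainPotential_le_mane (hsl : UniformlySuperlinear c) (x y : X) :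
    -chainPotential c y x ≤ mane c x y := by
  classical
  rcases eq_or_ne x y with rfl | hxy
  · linarith [chainPotential_self_nonneg hsl (c := c) x, mane_self_s5 hsl (c := c) x]
  · simpa [hxy] using (dominated_update_chainPotential hsl y).sub_le_mane x y

end Mane

section Growth

variable {X : Type*} [MetricSpace X]

/- Greedy grouping: `t` is the length travelled since the last anchor `w`; jumping from the anchor
costs at most `S` and is paid for by more than `K` of chain length. -/
lemma sub_le_of_chain_of_dist_le_two_mul {u : X → ℝ} {K S : ℝ} (hK : 0 < K) (hS : 0 ≤ S)
    (hu : ∀ a b, dist a b ≤ 2 * K → u b - u a ≤ S) (n : ℕ) :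
    ∀ (p : ℕ → X), (∀ i < n, dist (p i) (p (i + 1)) ≤ K) → ∀ (w : X) (t : ℝ),
      dist w (p 0) ≤ t → t ≤ K →
      u (p n) - u w ≤ S * (t + ∑ i ∈ Finset.range n, dist (p i) (p (i + 1))) / K + S := by
  induction n with
  | zero =>
    intro p _ w t hw ht
    have h₀ := hu w (p 0) (by linarith)
    have : 0 ≤ S * t / K := div_nonneg (mul_nonneg hS (dist_nonneg.trans hw)) hK.le
    simp only [Finset.range_zero, Finset.sum_empty, add_zero]
    linarith
  | succ n ih =>
    intro p hp w t hw ht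
    set d₀ := dist (p 0) (p 1)
    have hd₀ : d₀ ≤ K := hp 0 n.succ_pos
    have hw₁ : dist w (p 1) ≤ t + d₀ := (dist_triangle _ _ _).trans (by linarith)
    have hq := fun i (hi : i < n) => hp (i + 1) (by omega)
    rw [Finset.sum_range_succ']
    set T := ∑ i ∈ Finset.range n, dist (p (i + 1)) (p (i + 1 + 1))
    by_cases hshort : t + d₀ ≤ K
    · have := ih (fun i => p (i + 1)) hq w (t + d₀) hw₁ hshort
      rwa [show t + (T + d₀) = t + d₀ + T by ring]
    · have h₁ := hu w (p 1) (by linarith)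
      have h₂ := ih (fun i => p (i + 1)) hq (p 1) 0 (by simp) hK.le
      have hS' : S ≤ S * (t + d₀) / K := by
        rw [le_div_iff₀ hK]
        nlinarith
      have e : S * (t + (T + d₀)) / K = S * (t + d₀) / K + S * (0 + T) / K := by ring
      linarith

lemma Dominated.exists_sub_le_mul_dist_add {B K α : ℝ} {c : X → X → ℝ} {u : X → ℝ} (hK : 0 < K)
    (hlen : IsBLengthSpaceAtScale X B K) (hub : UniformlyBounded c) (hu : Dominated c α u) :
    ∃ L M : ℝ, ∀ a b, u b - u a ≤ L * dist a b + M := by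
  obtain ⟨A, hA⟩ := hub (2 * K)
  set S := max (A + α) 0
  have hlocal (a b : X) (hab : dist a b ≤ 2 * K) : u b - u a ≤ S :=
    (hu a b).trans (by linarith [hA a b hab, le_max_left (A + α) 0])
  refine ⟨S * B / K, S, fun a b => ?_⟩
  obtain ⟨n, p, hp0, hpn, hstep, hsum⟩ := hlen a b
  have := sub_le_of_chain_of_dist_le_two_mul hK (le_max_right _ _) hlocal n p hstep a 0
    (by simp [hp0]) hK.le
  rw [hpn, zero_add] at this
  calc u b - u a ≤ S * (∑ i ∈ Finset.range n, dist (p i) (p (i + 1))) / K + S := this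
    _ ≤ S * (B * dist a b) / K + S := by gcongr
    _ = S * B / K * dist a b + S := by ring

lemma Dominated.exists_dist_le {B K α : ℝ} {c : X → X → ℝ} {u : X → ℝ} (hK : 0 < K)
    (hlen : IsBLengthSpaceAtScale X B K) (hsl : UniformlySuperlinear c) (hub : UniformlyBounded c)
    (hu : Dominated c α u) : ∃ E, ∀ a b, dist a b ≤ c a b + α - (u b - u a) + E := by
  obtain ⟨L, M, hLM⟩ := hu.exists_sub_le_mul_dist_add hK hlen hub
  obtain ⟨C, hC⟩ := hsl (max L 0 + 1) (by positivity)
  refine ⟨C - α + M, fun a b => ?_⟩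
  have hL : L * dist a b ≤ max L 0 * dist a b := by gcongr; exact le_max_left _ _
  linarith [hLM a b, hC a b, add_one_mul (max L 0) (dist a b)]

end Growth

section Semicontinuity

variable {X : Type*} [MetricSpace X] {c : X → X → ℝ}

lemma upperSemicontinuous_chainPotential_right (hcont : Continuous fun q : X × X => c q.1 q.2)
    (hsl : UniformlySuperlinear c) (x : X) : UpperSemicontinuous (chainPotential c x) := by
  intro z r hr
  obtain ⟨h, k, hk, hx, hz, hlt⟩ := exists_lt_of_chainPotential_lt hr
  obtain ⟨n, rfl⟩ : ∃ n, k = n + 1 := ⟨k - 1, by omega⟩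
  have hbound : Continuous fun y => windowCost c h 0 n + c (h n) y + (n + 1) * critValue c :=
    (continuous_const.add (hcont.comp₂ continuous_const continuous_id)).add continuous_const
  have hval : windowCost c h 0 n + c (h n) z + (n + 1) * critValue c < r := by
    rw [windowCost_succ, zero_add, ← Nat.cast_succ, hz] at hlt
    push_cast at hlt
    exact hlt
  filter_upwards [(hbound.tendsto z).eventually_lt_const hval] with y hy
  exact (chainPotential_le_add_cost hsl hx n y).trans_lt hy

lemma upperSemicontinuous_chainPotential_left (hcont : Continuous fun q : X × X => c q.1 q.2)
    (hsl : UniformlySuperlinear c) (x : X) : UpperSemicontinuous fun y => chainPotential c y x := by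
  intro z r hr
  obtain ⟨h, k, hk, hz, hx, hlt⟩ := exists_lt_of_chainPotential_lt hr
  obtain ⟨n, rfl⟩ : ∃ n, k = n + 1 := ⟨k - 1, by omega⟩
  have hbound : Continuous fun y => c y (h 1) + windowCost c h 1 n + (n + 1) * critValue c :=
    ((hcont.comp₂ continuous_id continuous_const).add continuous_const).add continuous_const
  have hval : c z (h 1) + windowCost c h 1 n + (n + 1) * critValue c < r := by
    rw [windowCost_succ', zero_add, hz] at hlt
    push_cast at hlt
    linarith
  filter_upwards [(hbound.tendsto z).eventually_lt_const hval] with y hy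
  exact (chainPotential_le_cost_add hsl (by simpa using hx) y).trans_lt hy

end Semicontinuity

section Lower

variable {X : Type*} [MetricSpace X] {c : X → X → ℝ}

lemma IsCompact.eventually_forall_lt_cost_add (hcont : Continuous fun q : X × X => c q.1 q.2)
    {S : Set X} (hS : IsCompact S) (z : X) {ε : ℝ} (hε : 0 < ε) :
    ∀ᶠ z' in 𝓝 z, ∀ w ∈ S, c w z < c w z' + ε :=
  hS.eventually_forall_of_forall_eventually fun w _ => by
    have hdiff : Continuous fun q : X × X => c q.2 z - c q.2 q.1 :=
      (hcont.comp₂ continuous_snd continuous_const).sub (hcont.comp continuous_swap)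
    filter_upwards [(hdiff.tendsto (z, w)).eventually_lt_const
      (show c w z - c w z < ε by simpa using hε)] with q hq
    linarith

lemma lowerSemicontinuous_chainPotential_right [ProperSpace X] {B K : ℝ} (hK : 0 < K)
    (hlen : IsBLengthSpaceAtScale X B K) (hcont : Continuous fun q : X × X => c q.1 q.2)
    (hsl : UniformlySuperlinear c) (hub : UniformlyBounded c) (x : X) :
    LowerSemicontinuous (chainPotential c x) := by
  classical
  intro z r hr
  set α := critValue c
  set ε := chainPotential c x z - r
  have hε : 0 < ε := sub_pos.2 hr
  set u := Function.update (chainPotential c x) x 0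
  have hu : Dominated c α u := dominated_update_chainPotential hsl x
  obtain ⟨E, hE⟩ := hu.exists_dist_le hK hlen hsl hub
  obtain ⟨A, hA⟩ := hub (dist x z + 1)
  obtain ⟨A', hA'⟩ := hub (dist z x + 1)
  set R := A + A' + 2 * α + ε + E + 1
  filter_upwards [(isCompact_closedBall z R).eventually_forall_lt_cost_add hcont z (half_pos hε),
    ball_mem_nhds z one_pos] with z' htube hz'
  rw [mem_ball] at hz'
  obtain ⟨h, k, hk, hx, hz'k, hlt⟩ :=
    exists_lt_of_chainPotential_lt (lt_add_of_pos_right (chainPotential c x z') (half_pos hε))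
  obtain ⟨n, rfl⟩ : ∃ n, k = n + 1 := ⟨k - 1, by omega⟩
  rw [windowCost_succ, zero_add, ← Nat.cast_succ, hz'k] at hlt
  push_cast at hlt
  -- the last step of a near-optimal chain has bounded defect, hence bounded length
  have hpen : h n ∈ closedBall z R := by
    have hlast := hu.windowDefect_one_le (h := h) 0 n.lt_succ_self
    rw [windowDefect_one, windowDefect] at hlast
    simp only [zero_add, hx, ← Nat.cast_succ, hz'k, windowCost_succ] at hlast
    have := hE (h n) z'
    have := chainPotential_le_cost hsl x z'
    have := hA x z' (by linarith [dist_triangle x z z', dist_comm z z'])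
    have := hu z' x
    have := hA' z' x (by linarith [dist_triangle z' z x, dist_comm z z'])
    rw [mem_closedBall]
    push_cast at hlast
    linarith [dist_triangle (h n) z' z]
  linarith [chainPotential_le_add_cost hsl hx n z, htube _ hpen]

end Lower

section Aubry

variable {X : Type*} [MetricSpace X] {c : X → X → ℝ}

lemma isCalibrated_of_tendsto (hcont : Continuous fun q : X × X => c q.1 q.2) {α : ℝ}
    {u : X → ℝ} (hu : Dominated c α u) {Y : ℕ → ℤ → X} {g : ℤ → X}
    (hY : Tendsto Y atTop (𝓝 g)) {ε : ℕ → ℝ} (hε : Tendsto ε atTop (𝓝 0))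
    (hdef : ∀ j a k, windowDefect c α u (Y j) a k ≤ k * ε j) : IsCalibrated c α u g := by
  intro m k
  have hwin : Continuous fun h : ℤ → X => windowCost c h m k :=
    continuous_finsetSum _ fun i _ => hcont.comp₂ (continuous_apply _) (continuous_apply _)
  -- `u` need not be continuous, so compare `g` on `[m, m + k]` with `Y j` on `[m - 1, m + k + 1]`,
  -- using domination for the two outer steps; `Φ (Y j) → Φ g = 0` is the cost of this swap.
  set Φ : (ℤ → X) → ℝ := fun h =>
    c (h (m - 1)) (g m) - c (h (m - 1)) (h m) + (windowCost c g m k - windowCost c h m k) +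
      (c (g (m + k)) (h (m + k + 1)) - c (h (m + k)) (h (m + k + 1)))
  have hΦ : Continuous Φ :=
    (((hcont.comp₂ (continuous_apply _) continuous_const).sub
      (hcont.comp₂ (continuous_apply _) (continuous_apply _))).add
      (continuous_const.sub hwin)).add
      ((hcont.comp₂ continuous_const (continuous_apply _)).sub
        (hcont.comp₂ (continuous_apply _) (continuous_apply _)))
  have hlim : Tendsto (fun j => (k + 2) * ε j + Φ (Y j)) atTop (𝓝 0) := by
    simpa [Φ] using (hε.const_mul _).add ((hΦ.tendsto g).comp hY)
  have hbound (j : ℕ) : windowDefect c α u g m k ≤ (k + 2) * ε j + Φ (Y j) := by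
    have h₁ := hdef j (m - 1) (k + 1 + 1)
    have h₂ := hu (Y j (m - 1)) (g m)
    have h₃ := hu (g (m + k)) (Y j (m + k + 1))
    rw [windowDefect, windowCost_succ', sub_add_cancel, windowCost_succ,
      show m - 1 + ((k + 1 + 1 : ℕ) : ℤ) = m + k + 1 by push_cast; ring] at h₁
    simp only [windowDefect, Φ]
    push_cast at h₁ ⊢
    linarith
  have h₀ := hu.windowDefect_nonneg (h := g) m k
  have := ge_of_tendsto' hlim hbound
  rw [windowDefect] at h₀ this
  show u (g (m + k)) = u (g m) + windowCost c g m k + k * α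
  linarith

lemma mem_projAubrySet_of_chainPotential_self_eq_zero [ProperSpace X] {B K : ℝ} (hK : 0 < K)
    (hlen : IsBLengthSpaceAtScale X B K) (hcont : Continuous fun q : X × X => c q.1 q.2)
    (hsl : UniformlySuperlinear c) (hub : UniformlyBounded c) {x : X}
    (hx : chainPotential c x x = 0) : x ∈ projAubrySet c := by
  classical
  choose Y N hN hper hY0 hW using fun j : ℕ =>
    exists_periodic_of_chainPotential_self_lt (ε := 1 / (j + 1)) (hx ▸ Nat.one_div_pos_of_nat)
  set W : ℕ → ℝ := fun j => windowCost c (Y j) 0 (N j) + N j * critValue c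
  have hW0 (j : ℕ) : 0 ≤ W j := windowCost_add_mul_critValue_nonneg hsl (by simpa using hper j 0)
  have hWlim : Tendsto W atTop (𝓝 0) :=
    tendsto_of_tendsto_of_tendsto_of_le_of_le tendsto_const_nhds
      tendsto_one_div_add_atTop_nhds_zero_nat hW0 fun j => (hW j).le
  have hu₀ := dominated_update_chainPotential hsl x
  obtain ⟨E, hE⟩ := hu₀.exists_dist_le hK hlen hsl hub
  -- each step of a cheap closed chain has small defect, hence bounded length
  have hstep (j : ℕ) (i : ℤ) : dist (Y j i) (Y j (i + 1)) ≤ 1 + E := by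
    have := hu₀.windowDefect_le_of_periodic (hper j) (hN j) i 1
    rw [windowDefect_one, Nat.cast_one, one_mul] at this
    linarith [hE (Y j i) (Y j (i + 1)), (hW j).trans_le
      (div_le_one_of_le₀ (by linarith [(j.cast_nonneg : (0 : ℝ) ≤ j)]) (by positivity))]
  have hmem (j : ℕ) : Y j ∈ Set.pi Set.univ fun i => closedBall x (i.natAbs * (1 + E)) :=
    fun i _ => by simpa [mem_closedBall, dist_comm, hY0] using dist_zero_le_natAbs_mul (hstep j) i
  obtain ⟨g, -, ψ, hψ, hlim⟩ :=
    (isCompact_univ_pi fun i => isCompact_closedBall x _).isSeqCompact hmem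
  intro u hu
  refine ⟨g, isCalibrated_of_tendsto hcont hu hlim (hWlim.comp hψ.tendsto_atTop)
    fun j a k => hu.windowDefect_le_of_periodic (hper _) (hN _) a k, ?_⟩
  exact tendsto_nhds_unique (((continuous_apply 0).tendsto g).comp hlim)
    (by simp only [Function.comp_def, hY0]; exact tendsto_const_nhds)

lemma chainPotential_self_eq_zero_of_mem_projAubrySet (hsl : UniformlySuperlinear c) {x : X}
    (hx : x ∈ projAubrySet c) : chainPotential c x x = 0 := by
  classical
  refine le_antisymm ?_ (chainPotential_self_nonneg hsl x)
  obtain ⟨z, hz, hz0⟩ := hx _ (dominated_update_chainPotential hsl x)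
  have hcal := hz (-1) 1
  simp only [Nat.cast_one, neg_add_cancel, Finset.sum_range_one, Nat.cast_zero, add_zero,
    one_mul, hz0, Function.update_self] at hcal
  by_cases hw : z (-1) = x
  · rw [hw, Function.update_self] at hcal
    linarith [chainPotential_le_cost hsl (c := c) x x]
  · rw [Function.update_of_ne hw] at hcal
    linarith [chainPotential_triangle hsl (c := c) x (z (-1)) x,
      chainPotential_le_cost hsl (c := c) (z (-1)) x]

end Aubry

section Continuity

variable {X : Type*} [MetricSpace X] {c : X → X → ℝ}

lemma continuousAt_mane_of_chainPotential_self_eq_zero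
    (hcont : Continuous fun q : X × X => c q.1 q.2) (hsl : UniformlySuperlinear c) {x : X}
    (hx : chainPotential c x x = 0) : ContinuousAt (mane c x) x := by
  rw [ContinuousAt, mane_self_s5 hsl, Metric.tendsto_nhds]
  intro ε hε
  rw [← hx] at hε
  filter_upwards [upperSemicontinuous_chainPotential_right hcont hsl x x ε hε,
    upperSemicontinuous_chainPotential_left hcont hsl x x ε hε] with y hxy hyx
  rw [Real.dist_eq, sub_zero, abs_lt]
  exact ⟨by linarith [neg_chainPotential_le_mane hsl x y],
    (mane_le_chainPotential hsl x y).trans_lt hxy⟩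

lemma chainPotential_self_eq_zero_of_continuousAt_mane [ProperSpace X] {B K : ℝ} (hK : 0 < K)
    (hlen : IsBLengthSpaceAtScale X B K) (hcont : Continuous fun q : X × X => c q.1 q.2)
    (hsl : UniformlySuperlinear c) (hub : UniformlyBounded c) {x : X} (hx : (𝓝[≠] x).NeBot)
    (hmane : ContinuousAt (mane c x) x) : chainPotential c x x = 0 := by
  refine le_antisymm (not_lt.1 fun hpos => ?_) (chainPotential_self_nonneg hsl x)
  have hlower := lowerSemicontinuous_chainPotential_right hK hlen hcont hsl hub x x _
    (half_lt_self hpos)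
  have hupper := hmane.eventually (eventually_lt_nhds (show mane c x x < chainPotential c x x / 2
    by rw [mane_self_s5 hsl]; positivity))
  obtain ⟨y, ⟨h₁, h₂⟩, hyx⟩ :=
    (((hlower.and hupper).filter_mono nhdsWithin_le_nhds).and
      (eventually_mem_nhdsWithin (s := {x}ᶜ))).exists
  linarith [chainPotential_le_mane hsl (c := c) hyx]

end Continuity

theorem aubry_iff_mane_continuous_general {X : Type*} [MetricSpace X] [ProperSpace X]
    {B K : ℝ} (hK : 0 < K) (hlen : IsBLengthSpaceAtScale X B K)
    {c : X → X → ℝ} (hcont : Continuous fun q : X × X => c q.1 q.2)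
    (hsl : UniformlySuperlinear c) (hub : UniformlyBounded c) (x : X) (hx : (𝓝[≠] x).NeBot) :
    ContinuousAt (mane c x) x ↔ x ∈ projAubrySet c :=
  ⟨fun h => mem_projAubrySet_of_chainPotential_self_eq_zero hK hlen hcont hsl hub
      (chainPotential_self_eq_zero_of_continuousAt_mane hK hlen hcont hsl hub hx h),
    fun h => continuousAt_mane_of_chainPotential_self_eq_zero hcont hsl
      (chainPotential_self_eq_zero_of_mem_projAubrySet hsl h)⟩

theorem aubry_iff_mane_continuous {X : Type*} [MetricSpace X] [Nonempty X] [ProperSpace X]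
    {B K : ℝ} (hB : 1 ≤ B) (hK : 0 < K) (hlen : IsBLengthSpaceAtScale X B K)
    {c : X → X → ℝ} (hcont : Continuous fun q : X × X => c q.1 q.2)
    (hsl : UniformlySuperlinear c) (hub : UniformlyBounded c) (x : X) (hx : (𝓝[≠] x).NeBot) :
    ContinuousAt (mane c x) x ↔ x ∈ projAubrySet c :=
  aubry_iff_mane_continuous_general hK hlen hcont hsl hub x hx
end

section
/- For every α[0]-dominated function u : X → ℝ, the Aubry sets of u and of T⁻u coincide: a bi-infinite sequence (xₙ)_{n∈ℤ} is (u,c,α[0])-calibrated if and only if it is (T⁻u,c,α[0])-calibrated. In particular A_u = A_{T⁻u} and Â_u = Â_{T⁻u}. -/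
open Metric Set Filter Topology

/-!
A calibrated chain makes every domination inequality `u (x (m+1)) - u (x m) ≤ c + α` along it an
equality, while `u - α ≤ T⁻u ≤ u (x m) + c (x m) (x (m+1))` holds everywhere. Hence along a
sequence calibrated for either `u` or `T⁻u`, `T⁻u = u - α` on its terms, and calibration only
depends on the increments of the function along the sequence.
-/

namespace IsCalibrated

variable {X : Type*} {c : X → X → ℝ} {α : ℝ} {u : X → ℝ} {x : ℤ → X}

theorem step (hx : IsCalibrated c α u x) (m : ℤ) :
    u (x (m + 1)) = u (x m) + c (x m) (x (m + 1)) + α := by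
  simpa using hx m 1

theorem congr_add_const {v : X → ℝ} {a : ℝ} (hv : ∀ m, v (x m) = u (x m) + a)
    (hx : IsCalibrated c α u x) : IsCalibrated c α v x := by
  intro m k
  rw [hv, hv, hx m k]
  ring

end IsCalibrated

namespace Dominated

variable {X : Type*} {c : X → X → ℝ} {α : ℝ} {u : X → ℝ}

theorem sub_le_Tm (hu : Dominated c α u) (x : X) : u x - α ≤ Tm c u x :=
  have : Nonempty X := ⟨x⟩
  le_ciInf fun y => by linarith [hu y x]

theorem Tm_le (hu : Dominated c α u) (x y : X) : Tm c u x ≤ u y + c y x :=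
  ciInf_le ⟨u x - α, by rintro r ⟨z, rfl⟩; linarith [hu z x]⟩ y

theorem Tm_eq_sub_of_isCalibrated (hu : Dominated c α u) {x : ℤ → X}
    (hx : IsCalibrated c α u x) (m : ℤ) : Tm c u (x m) = u (x m) - α := by
  refine le_antisymm ?_ (hu.sub_le_Tm _)
  have hstep := hx.step (m - 1)
  rw [sub_add_cancel] at hstep
  linarith [hu.Tm_le (x m) (x (m - 1))]

theorem Tm_eq_sub_of_isCalibrated_Tm (hu : Dominated c α u) {x : ℤ → X}
    (hx : IsCalibrated c α (Tm c u) x) (m : ℤ) : Tm c u (x m) = u (x m) - α := by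
  refine le_antisymm ?_ (hu.sub_le_Tm _)
  linarith [hx.step m, hu.Tm_le (x (m + 1)) (x m), hu.sub_le_Tm (x (m + 1))]

theorem isCalibrated_Tm_iff (hu : Dominated c α u) (x : ℤ → X) :
    IsCalibrated c α (Tm c u) x ↔ IsCalibrated c α u x :=
  ⟨fun hx => hx.congr_add_const (a := α) fun m => by
      rw [hu.Tm_eq_sub_of_isCalibrated_Tm hx m]; ring,
    fun hx => hx.congr_add_const (a := -α) fun m => by
      rw [hu.Tm_eq_sub_of_isCalibrated hx m]; ring⟩

end Dominated

theorem aubry_set_eq_aubry_set_Tm_general {X : Type*} {c : X → X → ℝ} {u : X → ℝ}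
    (hu : Dominated c (critValue c) u) :
    (∀ x : ℤ → X, IsCalibrated c (critValue c) u x ↔
      IsCalibrated c (critValue c) (Tm c u) x) ∧
    projAubry c u = projAubry c (Tm c u) ∧
    aubryPairs c u = aubryPairs c (Tm c u) := by
  have hiff x := (hu.isCalibrated_Tm_iff x).symm
  exact ⟨hiff, by simp only [projAubry, hiff], by simp only [aubryPairs, hiff]⟩

theorem aubry_set_eq_aubry_set_Tm {X : Type*} [MetricSpace X] [Nonempty X] [ProperSpace X]
    {B K : ℝ} (hB : 1 ≤ B) (hK : 0 < K) (hlen : IsBLengthSpaceAtScale X B K)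
    {c : X → X → ℝ} (hcont : Continuous fun q : X × X => c q.1 q.2)
    (hsl : UniformlySuperlinear c) (hub : UniformlyBounded c)
    {u : X → ℝ} (hu : Dominated c (critValue c) u) :
    (∀ x : ℤ → X, IsCalibrated c (critValue c) u x ↔
      IsCalibrated c (critValue c) (Tm c u) x) ∧
    projAubry c u = projAubry c (Tm c u) ∧
    aubryPairs c u = aubryPairs c (Tm c u) :=
  aubry_set_eq_aubry_set_Tm_general hu
end

section
/- Let u be a critical sub-solution and x ∈ X. If x ∈ A_u, then for every p ∈ ℕ one has (T⁻)ᵖu(x) + p·α[0] = u(x) = (T⁺)ᵖu(x) − p·α[0]. Conversely, if u is continuous and (T⁻)ᵖu(x) + p·α[0] = u(x) = (T⁺)ᵖu(x) − p·α[0] for every p ∈ ℕ, then x ∈ A_u. -/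
open Metric Set Filter Topology

/-!
Reversing time exchanges the two semigroups: `T⁻` for `(c, u)` is `-T⁺` for `(flip c, -u)`, and a
bi-infinite calibrated chain through `x` is the same as a forward calibrated ray from `x` for
`(c, u)` glued to one for `(flip c, -u)`. So everything reduces to one statement about `T⁺`:
`x` starts a calibrated ray iff `(T⁺)ᵖ u x = u x + p α[0]` for all `p`.

If the ray exists, it realises the supremum defining every iterate. Conversely, a near-maximiser of
`(T⁺)ᵖ u x` is a chain of length `p` from `x` whose steps are calibrated up to an error that
tends to `0` with `p`. On a length space a dominated function is coarsely Lipschitz, so by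
superlinearity of `c` the steps of these chains have uniformly bounded length; the `n`-th points
then stay in a fixed compact ball, and a limit of a subsequence, which exists by compactness of the
product of these balls, is a calibrated ray by continuity of `c` and `u`.
-/

theorem Real.iSup_neg {ι : Sort*} (f : ι → ℝ) : ⨆ i, -f i = -⨅ i, f i := by
  rw [iSup, iInf, ← Real.sSup_neg]
  congr 1
  ext y
  simp [neg_eq_iff_eq_neg]

section

variable {X : Type*} {c : X → X → ℝ} {α : ℝ} {u : X → ℝ}

def IsCalibratedRay (c : X → X → ℝ) (α : ℝ) (u : X → ℝ) (F : ℕ → X) : Prop :=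
  ∀ n, u (F (n + 1)) = u (F n) + c (F n) (F (n + 1)) + α

theorem Dominated.flip_neg (hu : Dominated c α u) : Dominated (flip c) α (-u) :=
  fun x y => by simp only [flip, Pi.neg_apply]; linarith [hu y x]

theorem Tm_eq_neg_Tp_flip (u : X → ℝ) : Tm c u = -Tp (flip c) (-u) := by
  funext x
  simp only [Tm, Tp, Pi.neg_apply, flip]
  rw [← neg_neg (⨅ y, u y + c y x), ← Real.iSup_neg]
  simp only [neg_add']

theorem iterate_Tm_eq_neg_iterate_Tp_flip (u : X → ℝ) (p : ℕ) :
    (Tm c)^[p] u = -(Tp (flip c))^[p] (-u) := by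
  induction p generalizing u with
  | zero => simp
  | succ p ih =>
    rw [Function.iterate_succ_apply, ih, Tm_eq_neg_Tp_flip, neg_neg, Function.iterate_succ_apply]

theorem isCalibrated_iff {w : ℤ → X} :
    IsCalibrated c α u w ↔ ∀ m, u (w (m + 1)) = u (w m) + c (w m) (w (m + 1)) + α := by
  refine ⟨fun h m => by simpa using h m 1, fun h m k => ?_⟩
  induction k with
  | zero => simp
  | succ k ih =>
    rw [Finset.sum_range_succ]
    push_cast
    rw [← add_assoc, h, ih]
    ring

theorem exists_isCalibrated_iff (x : X) :
    (∃ w, IsCalibrated c α u w ∧ w 0 = x) ↔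
      (∃ F, F 0 = x ∧ IsCalibratedRay c α u F) ∧
        ∃ G, G 0 = x ∧ IsCalibratedRay (flip c) α (-u) G := by
  simp only [isCalibrated_iff]
  constructor
  · rintro ⟨w, hw, rfl⟩
    refine ⟨⟨fun n => w n, rfl, fun n => by exact_mod_cast hw n⟩,
      ⟨fun n => w (-n), by simp, fun n => ?_⟩⟩
    have := hw (-(n + 1 : ℕ))
    push_cast at this ⊢
    rw [show -((n : ℤ) + 1) + 1 = -n by ring] at this
    simp only [flip, Pi.neg_apply]
    linarith
  · rintro ⟨⟨F, hF0, hF⟩, ⟨G, hG0, hG⟩⟩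
    set w : ℤ → X := fun j => if 0 ≤ j then F j.toNat else G (-j).toNat
    have hw : ∀ n : ℕ, w n = F n ∧ w (-n) = G n := by
      intro n
      refine ⟨by simp [w], ?_⟩
      rcases n with _ | n
      · simp [w, hF0, hG0]
      · simp only [w, if_neg (by omega : ¬(0 : ℤ) ≤ -((n + 1 : ℕ) : ℤ)), neg_neg,
          Int.toNat_natCast]
    have hpos : ∀ n : ℕ, u (w (n + 1)) = u (w n) + c (w n) (w (n + 1)) + α := fun n => by
      have h1 := (hw (n + 1)).1
      push_cast at h1
      rw [h1, (hw n).1]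
      exact hF n
    refine ⟨w, fun m => ?_, (hw 0).1.trans hF0⟩
    obtain ⟨n, rfl | rfl⟩ := m.eq_nat_or_neg
    · exact hpos n
    rcases n with _ | n
    · simpa using hpos 0
    have := hG n
    rw [show -((n + 1 : ℕ) : ℤ) + 1 = -n by push_cast; ring, (hw n).2, (hw (n + 1)).2]
    simp only [flip, Pi.neg_apply] at this
    linarith

theorem Dominated.iterate_Tp_le [Nonempty X] (hu : Dominated c α u) (p : ℕ) (x : X) :
    (Tp c)^[p] u x ≤ u x + p * α := by
  induction p generalizing x with
  | zero => simp
  | succ p ih =>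
    rw [Function.iterate_succ_apply']
    refine ciSup_le fun y => ?_
    push_cast
    linarith [ih y, hu x y]

theorem IsCalibratedRay.iterate_Tp_eq [Nonempty X] {F : ℕ → X} (hF : IsCalibratedRay c α u F)
    (hu : Dominated c α u) (p : ℕ) : (Tp c)^[p] u (F 0) = u (F 0) + p * α := by
  induction p generalizing F with
  | zero => simp
  | succ p ih =>
    have hshift : (Tp c)^[p] u (F 1) = u (F 1) + p * α :=
      ih (F := fun n => F (n + 1)) fun n => hF (n + 1)
    have hbound : ∀ y, (Tp c)^[p] u y - c (F 0) y ≤ u (F 0) + (p + 1 : ℕ) * α := fun y => by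
      push_cast
      linarith [hu.iterate_Tp_le p y, hu (F 0) y]
    rw [Function.iterate_succ_apply']
    refine le_antisymm (ciSup_le hbound) (le_ciSup_of_le ⟨_, forall_mem_range.2 hbound⟩ (F 1) ?_)
    push_cast
    linarith [hF 0]

theorem sub_le_add_mul_sum_dist_of_chain [PseudoMetricSpace X] {f : X → ℝ} {K N : ℝ} (hK : 0 < K)
    (hf : ∀ x y, dist x y ≤ K → f y - f x ≤ N) {n : ℕ} {q : ℕ → X}
    (hq : ∀ i < n, dist (q i) (q (i + 1)) ≤ K) :
    f (q n) - f (q 0) ≤ N + 2 * N / K * ∑ i ∈ Finset.range n, dist (q i) (q (i + 1)) := by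
  set T := 2 * N / K
  have hT : 0 ≤ T := div_nonneg (by linarith [hf (q 0) (q 0) (by simp [hK.le])]) hK.le
  have hTK : T * K = 2 * N := div_mul_cancel₀ _ hK.ne'
  have hshort : ∀ j m, j ≤ m → ∑ i ∈ Finset.Ico j m, dist (q i) (q (i + 1)) ≤ K →
      f (q m) - f (q j) ≤ N :=
    fun j m hjm h => hf _ _ ((dist_le_Ico_sum_dist q hjm).trans h)
  -- Invariant: an anchor `q j` within chain length `K` of `q m` obeys the linear bound. When the
  -- chain leaves this window, the two hops `q j → q m → q (m + 1)` cost `2 N = T K`, which the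
  -- chain length `> K` travelled since `q j` pays for.
  have anchor : ∀ m ≤ n, ∃ j ≤ m, ∑ i ∈ Finset.Ico j m, dist (q i) (q (i + 1)) ≤ K ∧
      f (q j) - f (q 0) ≤ T * ∑ i ∈ Finset.range j, dist (q i) (q (i + 1)) := by
    intro m
    induction m with
    | zero => exact fun _ => ⟨0, le_rfl, by simp [hK.le], by simp⟩
    | succ m ih =>
      intro hm
      obtain ⟨j, hjm, hIco, hj⟩ := ih (by omega)
      by_cases hnext : ∑ i ∈ Finset.Ico j (m + 1), dist (q i) (q (i + 1)) ≤ K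
      · exact ⟨j, by omega, hnext, hj⟩
      refine ⟨m + 1, le_rfl, by simp [hK.le], ?_⟩
      have hlong := mul_le_mul_of_nonneg_left (not_le.1 hnext).le hT
      rw [← Finset.sum_range_add_sum_Ico _ (by omega : j ≤ m + 1), mul_add]
      linarith [hshort j m hjm hIco, hf _ _ (hq m (by omega))]
  obtain ⟨j, hjn, hIco, hj⟩ := anchor n le_rfl
  have hmono : ∑ i ∈ Finset.range j, dist (q i) (q (i + 1)) ≤
      ∑ i ∈ Finset.range n, dist (q i) (q (i + 1)) :=
    Finset.sum_le_sum_of_subset_of_nonneg (Finset.range_mono hjn) fun _ _ _ => dist_nonneg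
  linarith [hshort j n hjn hIco, mul_le_mul_of_nonneg_left hmono hT]

theorem Dominated.exists_coarse_lipschitz [MetricSpace X] [Nonempty X] {B K : ℝ} (hB : 1 ≤ B)
    (hK : 0 < K) (hlen : IsBLengthSpaceAtScale X B K) (hub : UniformlyBounded c)
    (hu : Dominated c α u) : ∃ L M : ℝ, 0 ≤ L ∧ ∀ a b, u b - u a ≤ L * dist a b + M := by
  obtain ⟨A, hA⟩ := hub K
  have hloc : ∀ x y, dist x y ≤ K → u y - u x ≤ A + α :=
    fun x y h => by linarith [hu x y, hA x y h]
  obtain ⟨x₀⟩ := ‹Nonempty X›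
  have hT : 0 ≤ 2 * (A + α) / K :=
    div_nonneg (by linarith [hloc x₀ x₀ (by simp [hK.le])]) hK.le
  refine ⟨2 * (A + α) / K * B, A + α, mul_nonneg hT (by linarith), fun a b => ?_⟩
  obtain ⟨n, q, rfl, rfl, hstep, hsum⟩ := hlen a b
  linarith [sub_le_add_mul_sum_dist_of_chain hK hloc hstep, mul_le_mul_of_nonneg_left hsum hT]

theorem Dominated.exists_dist_le_of_nearly_calibrated [MetricSpace X] [Nonempty X] {B K : ℝ}
    (hB : 1 ≤ B) (hK : 0 < K) (hlen : IsBLengthSpaceAtScale X B K)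
    (hsl : UniformlySuperlinear c) (hub : UniformlyBounded c) (hu : Dominated c α u) :
    ∃ D, 0 ≤ D ∧ ∀ a b, c a b + α ≤ u b - u a + 1 → dist a b ≤ D := by
  obtain ⟨L, M, hL, hLip⟩ := hu.exists_coarse_lipschitz hB hK hlen hub
  obtain ⟨C, hC⟩ := hsl (L + 1) (by linarith)
  refine ⟨max (C + M - α + 1) 0, le_max_right _ _, fun a b h => le_max_of_le_left ?_⟩
  linarith [hLip a b, hC a b]

theorem exists_chain_le_iterate_Tp [Nonempty X] (p : ℕ) (x : X) {ε : ℝ} (hε : 0 < ε) :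
    ∃ b : ℕ → X, b 0 = x ∧
      (Tp c)^[p] u x ≤ u (b p) - ∑ i ∈ Finset.range p, c (b i) (b (i + 1)) + ε := by
  induction p generalizing x ε with
  | zero => exact ⟨fun _ => x, rfl, by simp [hε.le]⟩
  | succ p ih =>
    have hlt : (Tp c)^[p + 1] u x - ε / 2 < Tp c ((Tp c)^[p] u) x := by
      rw [← Function.iterate_succ_apply' (Tp c)]
      linarith
    obtain ⟨y, hy⟩ := exists_lt_of_lt_ciSup hlt
    obtain ⟨b, hb0, hb⟩ := ih y (half_pos hε)
    refine ⟨fun | 0 => x | i + 1 => b i, rfl, ?_⟩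
    rw [Finset.sum_range_succ']
    subst hb0
    linarith

theorem Dominated.exists_nearly_calibrated_chain [Nonempty X] (hu : Dominated c α u) {p : ℕ}
    {x : X} (hp : (Tp c)^[p] u x = u x + p * α) {ε : ℝ} (hε : 0 < ε) :
    ∃ b : ℕ → X, b 0 = x ∧ ∀ i < p, c (b i) (b (i + 1)) + α ≤ u (b (i + 1)) - u (b i) + ε := by
  obtain ⟨b, rfl, hb⟩ := exists_chain_le_iterate_Tp (c := c) (u := u) p x hε
  refine ⟨b, rfl, fun i hi => ?_⟩
  set defect := fun j => c (b j) (b (j + 1)) + α - (u (b (j + 1)) - u (b j))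
  have htotal : ∑ j ∈ Finset.range p, defect j ≤ ε := by
    simp only [defect, Finset.sum_sub_distrib, Finset.sum_add_distrib,
      Finset.sum_range_sub (fun j => u (b j)), Finset.sum_const, Finset.card_range, nsmul_eq_mul]
    linarith
  have hsingle : defect i ≤ ∑ j ∈ Finset.range p, defect j :=
    Finset.single_le_sum (fun j _ => by simp only [defect]; linarith [hu (b j) (b (j + 1))])
      (Finset.mem_range.2 hi)
  simp only [defect] at hsingle
  linarith

theorem Dominated.exists_isCalibratedRay [MetricSpace X] [Nonempty X] [ProperSpace X]
    (hu : Dominated c α u) (hc : Continuous fun q : X × X => c q.1 q.2) (hu_cont : Continuous u)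
    {D : ℝ} (hD0 : 0 ≤ D)
    (hD : ∀ a b, c a b + α ≤ u b - u a + 1 → dist a b ≤ D) {x : X}
    (hx : ∀ p : ℕ, (Tp c)^[p] u x = u x + p * α) :
    ∃ F, F 0 = x ∧ IsCalibratedRay c α u F := by
  choose b hb0 hb using fun p : ℕ =>
    hu.exists_nearly_calibrated_chain (hx p) (Nat.one_div_pos_of_nat (n := p))
  -- Freeze the `p`-th chain after time `p`, so that its `n`-th point lies in `closedBall x (n * D)`.
  set v : ℕ → ℕ → X := fun p n => b p (min n p)
  have hv : ∀ p, v p ∈ univ.pi fun n : ℕ => closedBall x (n * D) := by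
    intro p n _
    have hstep : ∀ i < p, dist (b p i) (b p (i + 1)) ≤ D := fun i hi =>
      hD _ _ ((hb p i hi).trans (by gcongr; exact div_le_one_of_le₀ (by simp) (by positivity)))
    rw [mem_closedBall, dist_comm, ← hb0 p]
    calc dist (b p 0) (b p (min n p)) ≤ ∑ _ ∈ Finset.range (min n p), D :=
          dist_le_range_sum_of_dist_le _ fun hk => hstep _ (by omega)
      _ = min n p * D := by simp
      _ ≤ n * D := by gcongr; exact_mod_cast min_le_left n p
  obtain ⟨F, -, φ, hφ, hlim⟩ :=
    (isCompact_univ_pi fun n : ℕ => isCompact_closedBall x (n * D)).isSeqCompact hv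
  have hF : ∀ n, Tendsto (fun k => v (φ k) n) atTop (𝓝 (F n)) := tendsto_pi_nhds.1 hlim
  refine ⟨F, tendsto_nhds_unique (hF 0) (by simp [v, hb0]), fun n => ?_⟩
  have hlimit : c (F n) (F (n + 1)) + α ≤ u (F (n + 1)) - u (F n) + 0 := by
    refine le_of_tendsto_of_tendsto
      (((hc.tendsto _).comp ((hF n).prodMk_nhds (hF (n + 1)))).add_const α)
      ((((hu_cont.tendsto _).comp (hF (n + 1))).sub ((hu_cont.tendsto _).comp (hF n))).add
        (tendsto_one_div_add_atTop_nhds_zero_nat.comp hφ.tendsto_atTop))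
      (eventually_atTop.2 ⟨n + 1, fun k hk => ?_⟩)
    have hnk : n + 1 ≤ φ k := hk.trans (hφ.le_apply)
    simp only [Function.comp_apply, v, min_eq_left (by omega : n ≤ φ k),
      min_eq_left hnk]
    exact hb (φ k) n (by omega)
  linarith [hu (F n) (F (n + 1))]

end

theorem mem_aubry_iff_iterates_constant {X : Type*} [MetricSpace X] [Nonempty X] [ProperSpace X]
    {B K : ℝ} (hB : 1 ≤ B) (hK : 0 < K) (hlen : IsBLengthSpaceAtScale X B K)
    {c : X → X → ℝ} (hcont : Continuous fun q : X × X => c q.1 q.2)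
    (hsl : UniformlySuperlinear c) (hub : UniformlyBounded c)
    {u : X → ℝ} (hu : Dominated c (critValue c) u) (x : X) :
    (x ∈ projAubry c u →
      ∀ p : ℕ, (Tm c)^[p] u x + p * critValue c = u x ∧
        u x = (Tp c)^[p] u x - p * critValue c) ∧
    (Continuous u →
      (∀ p : ℕ, (Tm c)^[p] u x + p * critValue c = u x ∧
        u x = (Tp c)^[p] u x - p * critValue c) →
      x ∈ projAubry c u) := by
  have hu' := hu.flip_neg
  have hTm : ∀ p : ℕ, (Tm c)^[p] u x = -(Tp (flip c))^[p] (-u) x := fun p => by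
    rw [iterate_Tm_eq_neg_iterate_Tp_flip]
    rfl
  simp only [hTm]
  rw [show x ∈ projAubry c u ↔ _ from exists_isCalibrated_iff x]
  constructor
  · rintro ⟨⟨F, rfl, hF⟩, G, hG0, hG⟩ p
    have hback := hG.iterate_Tp_eq hu' p
    rw [hG0, Pi.neg_apply] at hback
    constructor <;> linarith [hF.iterate_Tp_eq hu p]
  · intro hu_cont h
    obtain ⟨D, hD0, hD⟩ := hu.exists_dist_le_of_nearly_calibrated hB hK hlen hsl hub
    refine ⟨hu.exists_isCalibratedRay hcont hu_cont hD0 hD fun p => by linarith [(h p).2],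
      hu'.exists_isCalibratedRay (hcont.comp continuous_swap) hu_cont.neg hD0
        (fun a b hab => ?_) fun p => ?_⟩
    · rw [dist_comm]
      exact hD b a (by simp only [flip, Pi.neg_apply] at hab; linarith)
    · rw [Pi.neg_apply]
      linarith [(h p).1]
end
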